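/- arXiv:1108.6328 — 5 statements merged into one kernel-verified Lean document; each statement's English description precedes it below -/
import Mathlib

section
/- If c' is less restrictive than c, then the result of the conjunctive query Q^{P,S,c} over a Web of Linked Data W is a subset of the result of Q^{P,S,c'} over W. -/
/-- A Web of Linked Data `W = (D, data, adoc)`:
`D` a countable set of documents, `data` assigns each document a finite set of
triples, `adoc` a partial surjective map from identifiers to documents. -/
structure Web (Doc U T : Type) where
  D : Set Doc
  data : Doc → Finset T
  adoc : U → Option Doc
  countable : D.Countable
  adoc_mem : ∀ u d, adoc u = some d → d ∈ D
  adoc_surj : ∀ d ∈ D, ∃ u, adoc u = some d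

section
variable {Doc U T TP V A : Type}

/-- All data triples of a Web of Linked Data. -/
def Web.AllData (W : Web Doc U T) : Set T :=
  ⋃ d ∈ W.D, (W.data d : Set T)

/-- `W'` is an induced subweb of `W`. -/
def InducedSubweb (W' W : Web Doc U T) : Prop :=
  W'.D ⊆ W.D ∧
  (∀ d ∈ W'.D, W'.data d = W.data d) ∧
  (∀ u d, W.adoc u = some d → d ∈ W'.D → W'.adoc u = some d) ∧
  (∀ u d, W'.adoc u = some d → W.adoc u = some d)

/-- `(c,P)`-reachability from a seed set `S` in `W`; `ids t` is the finite set of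
identifiers occurring in triple `t`, `c` a reachability criterion. -/
inductive Reachable (W : Web Doc U T) (ids : T → Finset U)
    (c : T → U → Finset TP → Bool) (S : Set U) (P : Finset TP) : Doc → Prop
  | base {u : U} {d : Doc} : u ∈ S → W.adoc u = some d → Reachable W ids c S P d
  | step {d' : Doc} {t : T} {u : U} {d : Doc} :
      Reachable W ids c S P d' → t ∈ W.data d' → u ∈ ids t →
      c t u P = true → W.adoc u = some d → Reachable W ids c S P d

/-- The set of documents of the `(S,c,P)`-reachable part of `W`. -/
def ReachSet (W : Web Doc U T) (ids : T → Finset U)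
    (c : T → U → Finset TP → Bool) (S : Set U) (P : Finset TP) : Set Doc :=
  {d | Reachable W ids c S P d}

/-- All data of the `(S,c,P)`-reachable part of `W`. -/
def ReachData (W : Web Doc U T) (ids : T → Finset U)
    (c : T → U → Finset TP → Bool) (S : Set U) (P : Finset TP) : Set T :=
  ⋃ d ∈ ReachSet W ids c S P, (W.data d : Set T)

/-- The variables occurring in a set of triple patterns. -/
def varsOf (vars : TP → Finset V) (Q : Finset TP) : Set V :=
  ⋃ tp ∈ (Q : Set TP), (vars tp : Set V)

/-- The result of the conjunctive query `Q^{P,S,c}` over `W`: all valuations `μ`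
with `dom μ = vars P` such that `μ[P] ⊆ AllData(R)`, `R` the reachable part.
`app μ tp` applies valuation `μ` to pattern `tp` (yielding a data triple). -/
def QueryResult (W : Web Doc U T) (ids : T → Finset U)
    (c : T → U → Finset TP → Bool) (S : Set U) (P : Finset TP)
    (vars : TP → Finset V) (app : (V → Option A) → TP → Option T) :
    Set (V → Option A) :=
  { μ | (∀ v, (μ v).isSome ↔ v ∈ varsOf vars P) ∧
        ∀ tp ∈ P, ∃ t ∈ ReachData W ids c S P, app μ tp = some t }

/-- A partial solution `(P₁, μ)` for `Q^{P,S,c}` in `W`. -/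
def PartialSolution (W : Web Doc U T) (ids : T → Finset U)
    (c : T → U → Finset TP → Bool) (S : Set U) (P : Finset TP)
    (vars : TP → Finset V) (app : (V → Option A) → TP → Option T)
    (P₁ : Finset TP) (μ : V → Option A) : Prop :=
  P₁ ⊆ P ∧ (∀ v, (μ v).isSome ↔ v ∈ varsOf vars P₁) ∧
  ∀ tp ∈ P₁, ∃ t ∈ ReachData W ids c S P, app μ tp = some t

/-- `Δ(μ,W)`: documents obtained by dereferencing identifiers bound by `μ`;
`toId a` extracts the identifier from `a` (if `a` is an identifier). -/
def Delta (W : Web Doc U T) (toId : A → Option U) (μ : V → Option A) : Set Doc :=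
  {d | ∃ v a u, μ v = some a ∧ toId a = some u ∧ W.adoc u = some d}

/-- `(P₁', μ')` is the `(t,tp)`-augmentation of `(P₁, μ)`. -/
def IsAug [DecidableEq TP] (vars : TP → Finset V)
    (app : (V → Option A) → TP → Option T)
    (P₁ : Finset TP) (μ : V → Option A) (t : T) (tp : TP)
    (P₁' : Finset TP) (μ' : V → Option A) : Prop :=
  P₁' = insert tp P₁ ∧ app μ' tp = some t ∧
  (∀ tp' ∈ P₁, app μ' tp' = app μ tp') ∧
  (∀ v, (μ' v).isSome ↔ v ∈ varsOf vars P₁')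

-- The reachability criterion `c_Match`: follow `u` in `t` iff `t` matches some
-- triple pattern of the query.
open scoped Classical in
noncomputable def cMatch (app : (V → Option A) → TP → Option T) :
    T → U → Finset TP → Bool :=
  fun t _ P => decide (∃ tp ∈ P, ∃ ν : V → Option A, app ν tp = some t)

/-- States `(𝔓, 𝔇)` arising during an execution of `ltbExec(S,P,W)`. -/
inductive ExecState [DecidableEq TP] (W : Web Doc U T) (toId : A → Option U)
    (S : Set U) (P : Finset TP) (vars : TP → Finset V)
    (app : (V → Option A) → TP → Option T) :
    Set (Finset TP × (V → Option A)) → Web Doc U T → Prop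
  | init (W0 : Web Doc U T) :
      InducedSubweb W0 W →
      W0.D = {d | ∃ u ∈ S, W.adoc u = some d} →
      ExecState W toId S P vars app {((∅ : Finset TP), fun _ => none)} W0
  | step {PP : Set (Finset TP × (V → Option A))} {DD : Web Doc U T}
      (P₁ : Finset TP) (μ : V → Option A) (t : T) (tp : TP)
      (P₁' : Finset TP) (μ' : V → Option A) (DD' : Web Doc U T) :
      ExecState W toId S P vars app PP DD →
      (P₁, μ) ∈ PP → t ∈ DD.AllData → tp ∈ P → tp ∉ P₁ →
      IsAug vars app P₁ μ t tp P₁' μ' →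
      (P₁', μ') ∉ PP →
      InducedSubweb DD' W → DD'.D = DD.D ∪ Delta W toId μ' →
      ExecState W toId S P vars app (PP ∪ {(P₁', μ')}) DD'

end

section
variable {Doc U T TP : Type} {W : Web Doc U T} {ids : T → Finset U}
  {c c' : T → U → Finset TP → Bool} {S : Set U} {P : Finset TP}

theorem Reachable.mono_criterion (h : ∀ t u Q, c t u Q = true → c' t u Q = true) {d : Doc}
    (hd : Reachable W ids c S P d) : Reachable W ids c' S P d := by
  induction hd with
  | base hu ha => exact .base hu ha
  | step _ ht hu hc ha ih => exact .step ih ht hu (h _ _ _ hc) ha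

theorem reachSet_mono (h : ∀ t u Q, c t u Q = true → c' t u Q = true) :
    ReachSet W ids c S P ⊆ ReachSet W ids c' S P :=
  fun _ => Reachable.mono_criterion h

theorem reachData_mono (h : ∀ t u Q, c t u Q = true → c' t u Q = true) :
    ReachData W ids c S P ⊆ ReachData W ids c' S P :=
  Set.biUnion_subset_biUnion_left (reachSet_mono h)

end

/-- If `c'` is less restrictive than `c`, then the result of
`Q^{P,S,c}` is a subset of the result of `Q^{P,S,c'}`. -/
theorem queryResult_mono {Doc U T TP V A : Type}
    (W : Web Doc U T) (ids : T → Finset U)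
    (c c' : T → U → Finset TP → Bool) (S : Set U) (P : Finset TP)
    (vars : TP → Finset V) (app : (V → Option A) → TP → Option T)
    (h : ∀ t u Q, c t u Q = true → c' t u Q = true) :
    QueryResult W ids c S P vars app ⊆ QueryResult W ids c' S P vars app := by
  rintro μ ⟨hdom, hP⟩
  refine ⟨hdom, fun tp htp => ?_⟩
  obtain ⟨t, ht, happ⟩ := hP tp htp
  exact ⟨t, reachData_mono h ht, happ⟩
end

section
/- Expansion stays within the reachable part under c_Match-semantics: let σ = (P₁, μ) be a partial solution for Q^{P,S,c_Match} in W, and let D' be a discovered part of W that is an induced subweb of the (S, c_Match, P)-reachable part R of W. Then the μ-expansion of D' in W is also an induced subweb of R. -/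
section
variable {Doc U T TP V A : Type}

theorem mem_varsOf {vars : TP → Finset V} {Q : Finset TP} {v : V} :
    v ∈ varsOf vars Q ↔ ∃ tp ∈ Q, v ∈ vars tp := by
  simp [varsOf]

theorem mem_reachData {W : Web Doc U T} {ids : T → Finset U}
    {c : T → U → Finset TP → Bool} {S : Set U} {P : Finset TP} {t : T} :
    t ∈ ReachData W ids c S P ↔ ∃ d ∈ ReachSet W ids c S P, t ∈ W.data d := by
  simp [ReachData]

theorem cMatch_of_app_eq {app : (V → Option A) → TP → Option T} {P : Finset TP}
    {tp : TP} (htp : tp ∈ P) {ν : V → Option A} {t : T} (happ : app ν tp = some t)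
    (u : U) : cMatch app t u P = true := by
  simpa only [cMatch, decide_eq_true_eq] using ⟨tp, htp, ν, happ⟩

theorem Reachable.of_mem_reachData {W : Web Doc U T} {ids : T → Finset U}
    {c : T → U → Finset TP → Bool} {S : Set U} {P : Finset TP} {t : T} {u : U}
    {d : Doc} (ht : t ∈ ReachData W ids c S P) (hu : u ∈ ids t) (hc : c t u P = true)
    (hd : W.adoc u = some d) : Reachable W ids c S P d := by
  obtain ⟨d', hd', htd'⟩ := mem_reachData.mp ht
  exact Reachable.step hd' htd' hu hc hd

theorem PartialSolution.exists_pattern_of_eq_some {W : Web Doc U T}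
    {ids : T → Finset U} {c : T → U → Finset TP → Bool} {S : Set U} {P : Finset TP}
    {vars : TP → Finset V} {app : (V → Option A) → TP → Option T} {P₁ : Finset TP}
    {μ : V → Option A} (hps : PartialSolution W ids c S P vars app P₁ μ) {v : V} {a : A}
    (hv : μ v = some a) : ∃ tp ∈ P, v ∈ vars tp ∧ ∃ t ∈ ReachData W ids c S P,
      app μ tp = some t := by
  obtain ⟨hsub, hdom, hmatch⟩ := hps
  obtain ⟨tp, htp, hvtp⟩ := mem_varsOf.mp ((hdom v).mp (by simp [hv]))
  exact ⟨tp, hsub htp, hvtp, hmatch tp htp⟩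

/-- Every identifier bound by `μ` occurs in a reachable triple that matches a pattern of `P`,
so under `c_Match` its document is reached in one more step. -/
theorem delta_subset_reachSet_cMatch {W : Web Doc U T} {ids : T → Finset U}
    {toId : A → Option U} {S : Set U} {P : Finset TP} {vars : TP → Finset V}
    {app : (V → Option A) → TP → Option T}
    (hids : ∀ (ν : V → Option A) (tp : TP) (t : T) (v : V) (a : A) (u : U),
      app ν tp = some t → v ∈ vars tp → ν v = some a → toId a = some u →
      u ∈ ids t)
    {P₁ : Finset TP} {μ : V → Option A}
    (hps : PartialSolution W ids (cMatch app) S P vars app P₁ μ) :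
    Delta W toId μ ⊆ ReachSet W ids (cMatch app) S P := by
  rintro d ⟨v, a, u, hv, ha, hd⟩
  obtain ⟨tp, htp, hvtp, t, ht, happ⟩ := hps.exists_pattern_of_eq_some hv
  exact Reachable.of_mem_reachData ht (hids μ tp t v a u happ hvtp hv ha)
    (cMatch_of_app_eq htp happ u) hd

end

theorem expansion_bounded_cMatch_general {Doc U T TP V A : Type}
    (W W1 W2 : Web Doc U T) (ids : T → Finset U) (toId : A → Option U)
    (S : Set U) (P : Finset TP) (vars : TP → Finset V)
    (app : (V → Option A) → TP → Option T)
    (hids : ∀ (ν : V → Option A) (tp : TP) (t : T) (v : V) (a : A) (u : U),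
      app ν tp = some t → v ∈ vars tp → ν v = some a → toId a = some u →
      u ∈ ids t)
    (P₁ : Finset TP) (μ : V → Option A)
    (hps : PartialSolution W ids (cMatch app) S P vars app P₁ μ)
    (hreach : W1.D ⊆ ReachSet W ids (cMatch app) S P)
    (hD : W2.D = W1.D ∪ Delta W toId μ) :
    W2.D ⊆ ReachSet W ids (cMatch app) S P :=
  hD ▸ Set.union_subset hreach (delta_subset_reachSet_cMatch hids hps)

/-- Under `c_Match`-semantics, expanding a discovered part inside
the reachable part by the valuation of a partial solution stays inside the
reachable part. `hids` links pattern application to identifier occurrence. -/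
theorem expansion_bounded_cMatch {Doc U T TP V A : Type} [DecidableEq TP]
    (W W1 W2 : Web Doc U T) (ids : T → Finset U) (toId : A → Option U)
    (S : Set U) (P : Finset TP) (vars : TP → Finset V)
    (app : (V → Option A) → TP → Option T)
    (hids : ∀ (ν : V → Option A) (tp : TP) (t : T) (v : V) (a : A) (u : U),
      app ν tp = some t → v ∈ vars tp → ν v = some a → toId a = some u →
      u ∈ ids t)
    (P₁ : Finset TP) (μ : V → Option A)
    (hps : PartialSolution W ids (cMatch app) S P vars app P₁ μ)
    (h1 : InducedSubweb W1 W) (hfin : W1.D.Finite)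
    (hreach : W1.D ⊆ ReachSet W ids (cMatch app) S P)
    (h2 : InducedSubweb W2 W) (hD : W2.D = W1.D ∪ Delta W toId μ) :
    W2.D ⊆ ReachSet W ids (cMatch app) S P :=
  expansion_bounded_cMatch_general W W1 W2 ids toId S P vars app hids P₁ μ hps hreach hD
end

section
/- Soundness of link traversal based execution: any valuation μ reported by an execution of the abstract procedure ltbExec(S, P, W) is a solution for the conjunctive query Q^{P,S,c_Match} over W, i.e., μ ∈ Q^{P,S,c_Match}(W). -/
/-!
The execution keeps two invariants: every element of `𝔓` is a partial solution, and every
document of `𝔇` is `(S, c_Match, P)`-reachable. An augmentation only uses a triple of `𝔇`,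
which is reachable data, so it is again a partial solution. Every identifier bound by such a
solution occurs in a reachable triple matching a pattern of `P`, so `c_Match` follows it and
the expansion of `𝔇` stays reachable. A reported `(P, μ)` is then a solution of the query.
-/

section
variable {Doc U T TP V A : Type}

lemma cMatch_eq_true {app : (V → Option A) → TP → Option T} {P : Finset TP} {tp : TP}
    {ν : V → Option A} {t : T} (u : U) (htp : tp ∈ P) (happ : app ν tp = some t) :
    cMatch app t u P = true := by
  classical
  exact decide_eq_true ⟨tp, htp, ν, happ⟩

lemma Web.allData_subset_reachData {W DD : Web Doc U T} {ids : T → Finset U}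
    {c : T → U → Finset TP → Bool} {S : Set U} {P : Finset TP} (hsub : InducedSubweb DD W)
    (hD : DD.D ⊆ ReachSet W ids c S P) : DD.AllData ⊆ ReachData W ids c S P := by
  simp only [Web.AllData, ReachData, Set.iUnion_subset_iff]
  intro d hd
  rw [hsub.2.1 d hd]
  exact Set.subset_biUnion_of_mem (u := fun d => (W.data d : Set T)) (hD hd)

namespace PartialSolution
variable {W : Web Doc U T} {ids : T → Finset U} {c : T → U → Finset TP → Bool} {S : Set U}
  {P : Finset TP} {vars : TP → Finset V} {app : (V → Option A) → TP → Option T}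

lemma empty : PartialSolution W ids c S P vars app ∅ fun _ => none :=
  ⟨Finset.empty_subset _, fun v => by simp [varsOf], fun _ h => absurd h (Finset.notMem_empty _)⟩

lemma augment [DecidableEq TP] {P₁ P₁' : Finset TP} {μ μ' : V → Option A} {t : T} {tp : TP}
    (hps : PartialSolution W ids c S P vars app P₁ μ) (htp : tp ∈ P)
    (ht : t ∈ ReachData W ids c S P) (haug : IsAug vars app P₁ μ t tp P₁' μ') :
    PartialSolution W ids c S P vars app P₁' μ' := by
  obtain ⟨rfl, happt, happ_old, hdom⟩ := haug
  refine ⟨Finset.insert_subset htp hps.1, hdom, fun tp' htp' => ?_⟩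
  rcases Finset.mem_insert.mp htp' with rfl | hold
  · exact ⟨t, ht, happt⟩
  · rw [happ_old tp' hold]
    exact hps.2.2 tp' hold

lemma delta_subset_reachSet {toId : A → Option U} {P₁ : Finset TP} {μ : V → Option A}
    (hids : ∀ (ν : V → Option A) (tp : TP) (t : T) (v : V) (a : A) (u : U),
      app ν tp = some t → v ∈ vars tp → ν v = some a → toId a = some u → u ∈ ids t)
    (hps : PartialSolution W ids (cMatch app) S P vars app P₁ μ) :
    Delta W toId μ ⊆ ReachSet W ids (cMatch app) S P := by
  rintro d ⟨v, a, u, hva, hau, hud⟩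
  have hv : v ∈ varsOf vars P₁ := (hps.2.1 v).mp (by simp [hva])
  simp only [varsOf, Set.mem_iUnion, Finset.mem_coe] at hv
  obtain ⟨tp, htp, hv⟩ := hv
  obtain ⟨t, htR, happ⟩ := hps.2.2 tp htp
  simp only [ReachData, Set.mem_iUnion, Finset.mem_coe] at htR
  obtain ⟨d', hd', htd'⟩ := htR
  exact Reachable.step hd' htd' (hids μ tp t v a u happ hv hva hau)
    (cMatch_eq_true u (hps.1 htp) happ) hud

end PartialSolution

namespace ExecState
variable [DecidableEq TP] {W : Web Doc U T} {toId : A → Option U} {S : Set U} {P : Finset TP}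
  {vars : TP → Finset V} {app : (V → Option A) → TP → Option T}
  {PP : Set (Finset TP × (V → Option A))} {DD : Web Doc U T}

lemma inducedSubweb (h : ExecState W toId S P vars app PP DD) : InducedSubweb DD W := by
  cases h <;> assumption

lemma partialSolution_and_reachSet {ids : T → Finset U}
    (hids : ∀ (ν : V → Option A) (tp : TP) (t : T) (v : V) (a : A) (u : U),
      app ν tp = some t → v ∈ vars tp → ν v = some a → toId a = some u → u ∈ ids t)
    (h : ExecState W toId S P vars app PP DD) :
    (∀ p ∈ PP, PartialSolution W ids (cMatch app) S P vars app p.1 p.2) ∧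
      DD.D ⊆ ReachSet W ids (cMatch app) S P := by
  induction h with
  | init W0 _ hD =>
    refine ⟨fun p hp => (Set.mem_singleton_iff.mp hp) ▸ PartialSolution.empty, ?_⟩
    rw [hD]
    rintro d ⟨u, hu, hud⟩
    exact Reachable.base hu hud
  | step P₁ μ t tp P₁' μ' DD' hexec hmem ht htp _ haug _ _ hD ih =>
    obtain ⟨ihP, ihD⟩ := ih
    have htR := Web.allData_subset_reachData hexec.inducedSubweb ihD ht
    have hps' := (ihP (P₁, μ) hmem).augment htp htR haug
    refine ⟨?_, ?_⟩
    · rintro p (hp | hp)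
      · exact ihP p hp
      · exact (Set.mem_singleton_iff.mp hp) ▸ hps'
    · rw [hD]
      exact Set.union_subset ihD (hps'.delta_subset_reachSet hids)

end ExecState

end

theorem ltbExec_sound_general {Doc U T TP V A : Type} [DecidableEq TP]
    (W : Web Doc U T) (ids : T → Finset U) (toId : A → Option U)
    (S : Set U) (P : Finset TP) (vars : TP → Finset V)
    (app : (V → Option A) → TP → Option T)
    (hids : ∀ (ν : V → Option A) (tp : TP) (t : T) (v : V) (a : A) (u : U),
      app ν tp = some t → v ∈ vars tp → ν v = some a → toId a = some u →
      u ∈ ids t) :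
    ∀ (PP : Set (Finset TP × (V → Option A))) (DD : Web Doc U T)
      (μ : V → Option A),
      ExecState W toId S P vars app PP DD → (P, μ) ∈ PP →
      μ ∈ QueryResult W ids (cMatch app) S P vars app := by
  intro PP DD μ hexec hmem
  obtain ⟨-, hdom, hmatch⟩ := (hexec.partialSolution_and_reachSet hids).1 (P, μ) hmem
  exact ⟨hdom, hmatch⟩

/-- Soundness of link traversal based query execution: any
valuation `μ` reported by `ltbExec(S,P,W)` (i.e. such that `(P,μ)` occurs in the
set of constructed partial solutions of a reachable execution state) is a
solution of `Q^{P,S,c_Match}` over `W`. -/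
theorem ltbExec_sound {Doc U T TP V A : Type} [DecidableEq TP]
    (W : Web Doc U T) (ids : T → Finset U) (toId : A → Option U)
    (S : Set U) (hS : S.Finite) (P : Finset TP) (vars : TP → Finset V)
    (app : (V → Option A) → TP → Option T)
    (hids : ∀ (ν : V → Option A) (tp : TP) (t : T) (v : V) (a : A) (u : U),
      app ν tp = some t → v ∈ vars tp → ν v = some a → toId a = some u →
      u ∈ ids t) :
    ∀ (PP : Set (Finset TP × (V → Option A))) (DD : Web Doc U T)
      (μ : V → Option A),
      ExecState W toId S P vars app PP DD → (P, μ) ∈ PP →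
      μ ∈ QueryResult W ids (cMatch app) S P vars app :=
  ltbExec_sound_general W ids toId S P vars app hids
end

section
/- Completeness of the expand procedure: for every data triple t ∈ AllData(R), where R is the (S,c,P)-reachable part of W, a fair dereferencing process (one that eventually dereferences every identifier u occurring in an already-obtained triple t' with c(t',u,P) = true, starting from dereferencing all of S) eventually obtains t; formally, there exists an index j such that t ∈ T_j for all j' ≥ j, where T_j is the union of data(adoc(u)) over the first j dereferenced identifiers. -/
section
variable {Doc U T TP : Type} {W : Web Doc U T} {ids : T → Finset U}
  {c : T → U → Finset TP → Bool} {S : Set U} {P : Finset TP}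

theorem Reachable.exists_mem_adoc_eq {X : Set U} (hS : S ⊆ X)
    (hclosed : ∀ x ∈ X, ∀ d t v, W.adoc x = some d → t ∈ W.data d → v ∈ ids t →
      c t v P = true → v ∈ X)
    {d : Doc} (hd : Reachable W ids c S P d) : ∃ x ∈ X, W.adoc x = some d := by
  induction hd with
  | base hu hadoc => exact ⟨_, hS hu, hadoc⟩
  | step _ ht hv hc hadoc ih =>
    obtain ⟨x, hx, hxd⟩ := ih
    exact ⟨_, hclosed x hx _ _ _ hxd ht hv hc, hadoc⟩

theorem exists_reachable_of_mem_reachData {t : T} (ht : t ∈ ReachData W ids c S P) :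
    ∃ d, Reachable W ids c S P d ∧ t ∈ W.data d := by
  simpa only [ReachData, ReachSet, Set.mem_iUnion, Set.mem_ofPred_eq, Finset.mem_coe, exists_prop]
    using ht

end

theorem fair_dereferencing_complete_general {Doc U T TP : Type}
    (W : Web Doc U T) (ids : T → Finset U) (c : T → U → Finset TP → Bool)
    (S : Set U) (P : Finset TP) (u : ℕ → U)
    (hinit : ∀ s ∈ S, ∃ n, u n = s)
    (hfair : ∀ (v : U) (t : T) (m : ℕ) (d : Doc), W.adoc (u m) = some d →
      t ∈ W.data d → v ∈ ids t → c t v P = true → ∃ n, u n = v) :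
    ∀ t ∈ ReachData W ids c S P, ∃ j, ∀ j' ≥ j,
      t ∈ {t' | ∃ m < j', ∃ d, W.adoc (u m) = some d ∧ t' ∈ W.data d} := by
  intro t ht
  obtain ⟨d, hd, htd⟩ := exists_reachable_of_mem_reachData ht
  have hclosed : ∀ x ∈ Set.range u, ∀ d t v, W.adoc x = some d → t ∈ W.data d →
      v ∈ ids t → c t v P = true → v ∈ Set.range u := by
    rintro _ ⟨m, rfl⟩ d t v hd ht hv hc
    exact hfair v t m d hd ht hv hc
  obtain ⟨_, ⟨m, rfl⟩, hm⟩ := hd.exists_mem_adoc_eq hinit hclosed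
  exact ⟨m + 1, fun j' hj' => ⟨m, hj', d, hm, htd⟩⟩

/-- Completeness of the expand procedure: a fair admissible
dereferencing process eventually obtains every triple of the reachable part. -/
theorem fair_dereferencing_complete {Doc U T TP : Type}
    (W : Web Doc U T) (ids : T → Finset U) (c : T → U → Finset TP → Bool)
    (S : Set U) (P : Finset TP) (u : ℕ → U)
    (hseq : ∀ n, u n ∈ S ∨ ∃ m < n, ∃ d t, W.adoc (u m) = some d ∧
      t ∈ W.data d ∧ u n ∈ ids t ∧ c t (u n) P = true)
    (hinit : ∀ s ∈ S, ∃ n, u n = s)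
    (hfair : ∀ (v : U) (t : T) (m : ℕ) (d : Doc), W.adoc (u m) = some d →
      t ∈ W.data d → v ∈ ids t → c t v P = true → ∃ n, u n = v) :
    ∀ t ∈ ReachData W ids c S P, ∃ j, ∀ j' ≥ j,
      t ∈ {t' | ∃ m < j', ∃ d, W.adoc (u m) = some d ∧ t' ∈ W.data d} :=
  fair_dereferencing_complete_general W ids c S P u hinit hfair
end

section
/- In the iterator-based execution, every partial solution emitted by iterator I_k covers exactly the first k triple patterns: for any partial solution (P', μ) output by I_k it holds P' = {tp₁, …, tp_k}. In particular, every valuation reported by the last iterator I_n is a valuation μ with dom(μ) = vars(P) such that (P, μ) is a partial solution, hence μ ∈ Q^{P,S,c_Match}(W). -/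
theorem PartialSolution.mem_queryResult {Doc U T TP V A : Type} {W : Web Doc U T}
    {ids : T → Finset U} {c : T → U → Finset TP → Bool} {S : Set U} {P : Finset TP}
    {vars : TP → Finset V} {app : (V → Option A) → TP → Option T} {μ : V → Option A}
    (h : PartialSolution W ids c S P vars app P μ) : μ ∈ QueryResult W ids c S P vars app :=
  h.2

theorem Finset.image_Icc_one_add_one {α : Type*} [DecidableEq α] (f : ℕ → α) (k : ℕ) :
    (Finset.Icc 1 (k + 1)).image f = insert (f (k + 1)) ((Finset.Icc 1 k).image f) := by
  rw [← Finset.insert_Icc_right_eq_Icc_add_one (by omega), Finset.image_insert]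

theorem fst_eq_image_Icc_of_isAug_step {T TP V A : Type} [DecidableEq TP]
    {vars : TP → Finset V} {app : (V → Option A) → TP → Option T} {n : ℕ} {tps : ℕ → TP}
    {Out : ℕ → Set (Finset TP × (V → Option A))} (h0 : ∀ σ ∈ Out 0, σ.1 = ∅)
    (hstep : ∀ k < n, ∀ σ' ∈ Out (k + 1), ∃ σ ∈ Out k, ∃ t : T,
      IsAug vars app σ.1 σ.2 t (tps (k + 1)) σ'.1 σ'.2) :
    ∀ k ≤ n, ∀ σ ∈ Out k, σ.1 = (Finset.Icc 1 k).image tps := by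
  intro k
  induction k with
  | zero => simpa using h0
  | succ k ih =>
    intro hk σ' hσ'
    obtain ⟨σ, hσ, t, haug⟩ := hstep k hk σ' hσ'
    rw [haug.1, ih (by omega) σ hσ, Finset.image_Icc_one_add_one]

/-- In the iterator-based execution, every partial solution emitted
by iterator `I_k` covers exactly the first `k` triple patterns; hence every
valuation of an output of the last iterator `I_n` is a solution of
`Q^{P,S,c_Match}` over `W`. -/
theorem iterator_covers_prefix {Doc U T TP V A : Type} [DecidableEq TP]
    (W : Web Doc U T) (ids : T → Finset U) (S : Set U)
    (vars : TP → Finset V) (app : (V → Option A) → TP → Option T)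
    (n : ℕ) (tps : ℕ → TP) (P : Finset TP)
    (hP : P = (Finset.Icc 1 n).image tps)
    (Out : ℕ → Set (Finset TP × (V → Option A)))
    (h0 : Out 0 = {((∅ : Finset TP), fun _ => (none : Option A))})
    (hstep : ∀ k < n, ∀ σ' ∈ Out (k + 1), ∃ σ ∈ Out k, ∃ t : T,
      IsAug vars app σ.1 σ.2 t (tps (k + 1)) σ'.1 σ'.2)
    (hps : ∀ k ≤ n, ∀ σ ∈ Out k,
      PartialSolution W ids (cMatch app) S P vars app σ.1 σ.2) :
    (∀ k ≤ n, ∀ σ ∈ Out k, σ.1 = (Finset.Icc 1 k).image tps) ∧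
    (∀ σ ∈ Out n, σ.2 ∈ QueryResult W ids (cMatch app) S P vars app) := by
  have hempty : ∀ σ ∈ Out 0, σ.1 = ∅ := by simp [h0]
  have covers := fst_eq_image_Icc_of_isAug_step hempty hstep
  refine ⟨covers, fun σ hσ => ?_⟩
  have hfull : σ.1 = P := (covers n le_rfl σ hσ).trans hP.symm
  have hsol := hps n le_rfl σ hσ
  rw [hfull] at hsol
  exact hsol.mem_queryResult
end
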